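/- arXiv:1511.03595 — 4 statements merged into one kernel-verified Lean document; each statement's English description precedes it below -/
import Mathlib

section
/- Replacing a product transition f(Q_1,...,Q_n) → q by the set of ordinary transitions {f(s_1,...,s_n) → q} ∪ {q' → s_i | q' ∈ Q_i, 1 ≤ i ≤ n}, where s_1,...,s_n are fresh non-final states, yields an automaton (with ε-transitions) accepting the same language as the automaton obtained by expanding the product transition into the set {f(q_1,...,q_n) → q | q_1 ∈ Q_1, ..., q_n ∈ Q_n}. -/
/-- Ground terms over a signature: function symbols `F` with arities `ar`. -/
inductive Tm (F : Type) (ar : F → ℕ) : Type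
  | mk (f : F) (ts : Fin (ar f) → Tm F ar) : Tm F ar

/-- Bottom-up run relation of an FTA with states `Q` and transition set `Δ`:
`Run ar Δ t q` means `t ⇒* q`. -/
inductive Run {F Q : Type} (ar : F → ℕ) (Δ : ∀ f : F, (Fin (ar f) → Q) → Q → Prop) :
    Tm F ar → Q → Prop
  | step (f : F) (ts : Fin (ar f) → Tm F ar) (qs : Fin (ar f) → Q) (q : Q) :
      Δ f qs q → (∀ i, Run ar Δ (ts i) (qs i)) → Run ar Δ (Tm.mk f ts) q


/-- Runs of an automaton with ordinary transitions `Δ` and ε-transitions `E`. -/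
inductive RunE {F Q : Type} (ar : F → ℕ) (Δ : ∀ f : F, (Fin (ar f) → Q) → Q → Prop)
    (E : Q → Q → Prop) : Tm F ar → Q → Prop
  | step (f : F) (ts : Fin (ar f) → Tm F ar) (qs : Fin (ar f) → Q) (q : Q) :
      Δ f qs q → (∀ i, RunE ar Δ E (ts i) (qs i)) → RunE ar Δ E (Tm.mk f ts) q
  | eps (t : Tm F ar) (q q' : Q) : RunE ar Δ E t q → E q q' → RunE ar Δ E t q'

/-- Replacing a product transition `f₀(R₁,...,Rₙ) → q₀` by fresh
non-final states `s₁,...,sₙ` (modelled by `Sum.inr i`), the single transition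
`f₀(s₁,...,sₙ) → q₀` and ε-transitions `q' → sᵢ` for `q' ∈ Rᵢ`, yields an
automaton accepting the same language as the one obtained by expanding the
product transition. -/
theorem stmt3 {F Q : Type} (ar : F → ℕ) (Δ : ∀ f : F, (Fin (ar f) → Q) → Q → Prop)
    (Qf : Set Q) (f₀ : F) (Rs : Fin (ar f₀) → Set Q) (q₀ : Q) :
    -- A: the automaton with the product transition expanded
    let ΔA : ∀ f : F, (Fin (ar f) → Q) → Q → Prop := fun f qs q =>
      Δ f qs q ∨ ∃ h : f = f₀, q = q₀ ∧ ∀ i, qs i ∈ Rs (Fin.cast (congrArg ar h) i)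
    -- B: states Q ⊕ fresh states, ordinary transitions = lifted Δ plus f₀(s₁,...,sₙ) → q₀
    let ΔB : ∀ f : F, (Fin (ar f) → (Q ⊕ Fin (ar f₀))) → (Q ⊕ Fin (ar f₀)) → Prop :=
      fun f qs q =>
        (∃ (qs' : Fin (ar f) → Q) (q' : Q),
            (∀ i, qs i = Sum.inl (qs' i)) ∧ q = Sum.inl q' ∧ Δ f qs' q') ∨
        (∃ h : f = f₀, q = Sum.inl q₀ ∧
            ∀ i, qs i = Sum.inr (Fin.cast (congrArg ar h) i))
    -- ε-transitions q' → sᵢ for q' ∈ Rᵢ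
    let E : (Q ⊕ Fin (ar f₀)) → (Q ⊕ Fin (ar f₀)) → Prop := fun a b =>
      ∃ (q' : Q) (i : Fin (ar f₀)), a = Sum.inl q' ∧ b = Sum.inr i ∧ q' ∈ Rs i
    {t : Tm F ar | ∃ q ∈ Qf, Run ar ΔA t q} =
      {t : Tm F ar | ∃ q ∈ Qf, RunE ar ΔB E t (Sum.inl q)} := by

  intro ΔA ΔB E
  ext t
  simp only [Set.mem_setOf_eq]
  constructor
  · rintro ⟨q, hq, hr⟩
    refine ⟨q, hq, ?_⟩
    clear hq
    induction hr with
    | step f ts qs q hΔ hsub ih =>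
      rcases hΔ with h | ⟨hf, hq, hmem⟩
      · exact RunE.step f ts (fun i => Sum.inl (qs i)) (Sum.inl q)
          (Or.inl ⟨qs, q, fun _ => rfl, rfl, h⟩) ih
      · subst hf; subst hq
        refine RunE.step f ts (fun i => Sum.inr (Fin.cast (congrArg ar rfl) i))
          (Sum.inl q) (Or.inr ⟨rfl, rfl, fun _ => rfl⟩) ?_
        intro i
        exact RunE.eps _ _ _ (ih i) ⟨qs i, _, rfl, rfl, by simpa using hmem i⟩
  · rintro ⟨q, hq, hr⟩
    refine ⟨q, hq, ?_⟩
    clear hq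
    have key : ∀ (t : Tm F ar) (p : Q ⊕ Fin (ar f₀)), RunE ar ΔB E t p →
        (∀ q, p = Sum.inl q → Run ar ΔA t q) ∧
        (∀ i, p = Sum.inr i → ∃ q ∈ Rs i, Run ar ΔA t q) := by
      intro t p h
      induction h with
      | step f ts qs q hΔ hsub ih =>
        rcases hΔ with ⟨qs', q', hqs, hq, hd⟩ | ⟨hf, hq, hqs⟩
        · subst hq
          constructor
          · rintro q'' h
            injection h with h; subst h
            exact Run.step f ts qs' q' (Or.inl hd) (fun i => (ih i).1 _ (hqs i))
          · intro i h; exact absurd h (by simp)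
        · subst hf; subst hq
          have hrs : ∀ i, ∃ q ∈ Rs i, Run ar ΔA (ts i) q := by
            intro i
            exact (ih i).2 _ (by simpa using hqs i)
          choose rs hmem hrun using hrs
          constructor
          · rintro q'' h
            injection h with h; subst h
            exact Run.step f ts rs _ (Or.inr ⟨rfl, rfl, fun i => by simpa using hmem i⟩) hrun
          · intro i h; exact absurd h (by simp)
      | eps t q q' hrun hE ih =>
        obtain ⟨r, i, rfl, rfl, hrR⟩ := hE
        constructor
        · intro q'' h; exact absurd h (by simp)
        · rintro i' h
          injection h with h; subst h
          exact ⟨r, hrR, ih.1 r rfl⟩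
    exact (key t _ hr).1 q rfl
end

section
/- If every ground term t ∈ Term(Σ) has a run t ⇒* q for some state q of an FTA (Q, Q_f, Σ, Δ), then the DFTA obtained by the subset-construction determinisation (keeping only nonempty productive subset-states) is complete. -/
/-- The states generated by the subset construction. -/
inductive DetState {F Q : Type} (ar : F → ℕ) (Δ : ∀ f : F, (Fin (ar f) → Q) → Q → Prop) :
    Set Q → Prop
  | mk (f : F) (Qs : Fin (ar f) → Set Q)
      (h : ∀ i, DetState ar Δ (Qs i))
      (hne : {q₀ | ∃ qs : Fin (ar f) → Q, (∀ i, qs i ∈ Qs i) ∧ Δ f qs q₀}.Nonempty) :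
      DetState ar Δ {q₀ | ∃ qs : Fin (ar f) → Q, (∀ i, qs i ∈ Qs i) ∧ Δ f qs q₀}

/-- Transitions of the subset-construction determinisation. -/
def DetDelta {F Q : Type} (ar : F → ℕ) (Δ : ∀ f : F, (Fin (ar f) → Q) → Q → Prop) :
    ∀ f : F, (Fin (ar f) → Set Q) → Set Q → Prop :=
  fun f Qs Q₀ => (∀ i, DetState ar Δ (Qs i)) ∧
    Q₀ = {q₀ | ∃ qs : Fin (ar f) → Q, (∀ i, qs i ∈ Qs i) ∧ Δ f qs q₀} ∧ Q₀.Nonempty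


lemma detstate_run {F Q : Type} (ar : F → ℕ) (Δ : ∀ f : F, (Fin (ar f) → Q) → Q → Prop)
    {S : Set Q} (h : DetState ar Δ S) : ∃ t : Tm F ar, S = {q | Run ar Δ t q} := by
  induction h with
  | mk f Qs h hne ih =>
    choose ts hts using ih
    refine ⟨Tm.mk f ts, Set.ext fun q => ?_⟩
    constructor
    · rintro ⟨qs, hqs, hΔ⟩
      exact Run.step f ts qs q hΔ (fun i => by have := hqs i; rwa [hts i] at this)
    · intro hq
      cases hq with
      | step _ _ qs _ hΔ hr => exact ⟨qs, fun i => by rw [hts i]; exact hr i, hΔ⟩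

/-- Lemma 3 of the paper: if every ground term has a run in the FTA,
then the subset-construction determinisation is complete: every function symbol
and every tuple of generated states has a transition. -/
theorem stmt7 {F Q : Type} (ar : F → ℕ) (Δ : ∀ f : F, (Fin (ar f) → Q) → Q → Prop)
    (hrun : ∀ t : Tm F ar, ∃ q : Q, Run ar Δ t q)
    (f : F) (Qs : Fin (ar f) → Set Q) (hQs : ∀ i, DetState ar Δ (Qs i)) :
    ∃ Q₀ : Set Q, DetDelta ar Δ f Qs Q₀ := by
  choose ts hts using fun i => detstate_run ar Δ (hQs i)
  obtain ⟨q, hq⟩ := hrun (Tm.mk f ts)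
  cases hq with
  | step _ _ qs _ hΔ hr =>
    refine ⟨_, hQs, rfl, q, qs, fun i => ?_, hΔ⟩
    rw [hts i]; exact hr i
end

section
/- If an FTA contains the state 'any' and all transitions of Δ_any, then every state of its subset-construction determinisation contains 'any' as an element. -/
/-- if the FTA contains the state `any` and all transitions of
`Δ_any`, then every state of the subset-construction determinisation contains
`any` as an element. -/
theorem stmt9 {F Q : Type} (ar : F → ℕ) (Δ : ∀ f : F, (Fin (ar f) → Q) → Q → Prop)
    (any : Q) (hany : ∀ f : F, Δ f (fun _ => any) any)
    (S : Set Q) (hS : DetState ar Δ S) : any ∈ S := by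
  induction hS with
  | mk f Qs h hne ih => exact ⟨fun _ => any, fun i => ih i, hany f⟩
end

section
/- Deciding-argument condition (general): Let Q_d be the state set of a complete DFTA obtained by determinisation, f an n-ary symbol, Ψ_i = T_i(f, Q_d) for 1 ≤ i ≤ n, Δ' ∈ Ψ_i. If Rhs(Δ' ∩ ⋂(∩Ψ_1, ..., ∩Ψ_{i-1}, ∩Ψ_{i+1}, ..., ∩Ψ_n)) = Rhs(Δ'), then for every tuple (Δ_1,...,Δ_n) ∈ Ψ_1 × ... × Ψ_n with Δ_i = Δ', one has Rhs(Δ_1 ∩ ... ∩ Δ_n) = Rhs(Δ'). -/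
/-- `Lhsf i (f,S)`: the transitions of `f` whose `i`-th left-hand-side state is
in `S` (a transition of `f` is modelled as a pair `(qs, q)` with `Δ f qs q`). -/
def Lhsf {F Q : Type} (ar : F → ℕ) (Δ : ∀ f : F, (Fin (ar f) → Q) → Q → Prop)
    (f : F) (i : Fin (ar f)) (S : Set Q) : Set ((Fin (ar f) → Q) × Q) :=
  {δ | Δ f δ.1 δ.2 ∧ δ.1 i ∈ S}

/-- `T i (f, 𝒬) = {Lhsf i (f,Q') | Q' ∈ 𝒬} \ {∅}`. -/
def Tfam {F Q : Type} (ar : F → ℕ) (Δ : ∀ f : F, (Fin (ar f) → Q) → Q → Prop)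
    (f : F) (i : Fin (ar f)) (𝒬 : Set (Set Q)) : Set (Set ((Fin (ar f) → Q) × Q)) :=
  (Lhsf ar Δ f i '' 𝒬) \ {∅}

/-- Lemma 4 of the paper, general deciding-argument condition:
with `Q_d` the state set of the complete determinised DFTA,
`Ψⱼ = T j (f, Q_d)` and `Δ' ∈ Ψᵢ`, if
`Rhs(Δ' ∩ ⋂(∩Ψ₁,...,∩Ψᵢ₋₁,∩Ψᵢ₊₁,...,∩Ψₙ)) = Rhs(Δ')`
then every tuple `(Δ₁,...,Δₙ) ∈ Ψ₁ × ... × Ψₙ` with `Δᵢ = Δ'` satisfies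
`Rhs(Δ₁ ∩ ... ∩ Δₙ) = Rhs(Δ')`. -/
theorem stmt16 {F Q : Type} (ar : F → ℕ) (Δ : ∀ f : F, (Fin (ar f) → Q) → Q → Prop)
    (hcomp : ∀ (f : F) (Qs : Fin (ar f) → Set Q),
      (∀ i, DetState ar Δ (Qs i)) → ∃ Q₀ : Set Q, DetDelta ar Δ f Qs Q₀)
    (f : F) (i : Fin (ar f)) (Δ' : Set ((Fin (ar f) → Q) × Q))
    (hΔ' : Δ' ∈ Tfam ar Δ f i {S : Set Q | DetState ar Δ S})
    (hcond : Prod.snd '' (Δ' ∩ ⋂ j : Fin (ar f), ⋂ (_ : j ≠ i),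
        ⋂₀ Tfam ar Δ f j {S : Set Q | DetState ar Δ S}) = Prod.snd '' Δ') :
    ∀ Δs : Fin (ar f) → Set ((Fin (ar f) → Q) × Q),
      (∀ j, Δs j ∈ Tfam ar Δ f j {S : Set Q | DetState ar Δ S}) → Δs i = Δ' →
      Prod.snd '' (⋂ j, Δs j) = Prod.snd '' Δ' := by
  intro Δs hΔs hi
  apply subset_antisymm
  · apply Set.image_mono
    rw [← hi]
    exact Set.iInter_subset _ i
  · rw [← hcond]
    apply Set.image_mono
    rintro x ⟨hx1, hx2⟩
    apply Set.mem_iInter.2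
    intro j
    by_cases hj : j = i
    · subst hj; rw [hi]; exact hx1
    · have h2 := Set.mem_iInter.1 (Set.mem_iInter.1 hx2 j) hj
      exact Set.sInter_subset_of_mem (hΔs j) h2
end
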